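/- arXiv:2202.05027 — 2 statements merged into one kernel-verified Lean document; each statement's English description precedes it below -/
import Mathlib

section
/- Let c > 0. For the system ẋ = 1 - x², ẏ = 2xy, any solution starting at (x₀, c) with -1 < x₀ < 0 reaches the section {y = c, x > 0} at the point (-x₀, c); i.e., the transition map between the sections {y=c, x∈(-1,0)} and {y=c, x∈(0,1)} is x ↦ -x. -/
/-! The quantity `y (1 - x²)` is a first integral of `ẋ = 1 - x², ẏ = 2xy`. On the section
`y = c ≠ 0` it therefore fixes `x²`, and the sign change of `x` forces `x T = -x₀`. -/

section FirstIntegral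

variable {x y : ℝ → ℝ}

theorem hasDerivAt_mul_one_sub_sq_eq_zero (hx : ∀ t, HasDerivAt x (1 - x t ^ 2) t)
    (hy : ∀ t, HasDerivAt y (2 * x t * y t) t) (t : ℝ) :
    HasDerivAt (fun t => y t * (1 - x t ^ 2)) 0 t := by
  have h := (hy t).mul (((hx t).fun_pow 2).const_sub 1)
  exact h.congr_deriv (by ring)

theorem mul_one_sub_sq_eq_of_hasDerivAt (hx : ∀ t, HasDerivAt x (1 - x t ^ 2) t)
    (hy : ∀ t, HasDerivAt y (2 * x t * y t) t) (s t : ℝ) :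
    y s * (1 - x s ^ 2) = y t * (1 - x t ^ 2) :=
  is_const_of_deriv_eq_zero
    (fun t => (hasDerivAt_mul_one_sub_sq_eq_zero hx hy t).differentiableAt)
    (fun t => (hasDerivAt_mul_one_sub_sq_eq_zero hx hy t).deriv) s t

end FirstIntegral

theorem stmt8_general (c : ℝ) (hc : 0 < c) (x y : ℝ → ℝ)
    (hx : ∀ t, HasDerivAt x (1 - x t ^ 2) t)
    (hy : ∀ t, HasDerivAt y (2 * x t * y t) t)
    (x₀ : ℝ) (hx₀' : x₀ < 0)
    (h0x : x 0 = x₀) (h0y : y 0 = c)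
    (T : ℝ) (hTy : y T = c) (hTx : 0 < x T) :
    x T = -x₀ := by
  have hconst := mul_one_sub_sq_eq_of_hasDerivAt hx hy T 0
  rw [hTy, h0y, h0x] at hconst
  have hsq : x T ^ 2 = x₀ ^ 2 := by
    have := mul_left_cancel₀ hc.ne' hconst
    linarith
  rw [sq_eq_sq_iff_abs_eq_abs, abs_of_pos hTx, abs_of_neg hx₀'] at hsq
  exact hsq

/-- Reflection lemma: for ẋ = 1 - x², ẏ = 2xy, a solution starting at (x₀, c)
with -1 < x₀ < 0 which returns to the section {y = c} with x > 0 does so at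
the reflected point (-x₀, c). -/
theorem stmt8 (c : ℝ) (hc : 0 < c) (x y : ℝ → ℝ)
    (hx : ∀ t, HasDerivAt x (1 - x t ^ 2) t)
    (hy : ∀ t, HasDerivAt y (2 * x t * y t) t)
    (x₀ : ℝ) (hx₀ : -1 < x₀) (hx₀' : x₀ < 0)
    (h0x : x 0 = x₀) (h0y : y 0 = c)
    (T : ℝ) (hT : 0 < T) (hTy : y T = c) (hTx : 0 < x T) :
    x T = -x₀ :=
  stmt8_general c hc x y hx hy x₀ hx₀' h0x h0y T hTy hTx
end

section
/- Fix k ∈ ℕ, k ≥ 1, β > 0. Consider the equilibrium equation for the desingularized reduced problem ẋ = α(ν - kβν^{-k}), ν̇ = (2x - αg₀ + βν^{-k})ν with parameters α > 0, g₀ ∈ ℝ. Then there is a unique equilibrium with ν > 0, located at ν_f = (kβ)^{1/(k+1)} and x_f = (α g₀)/2 - (β/2)·ν_f^{-k}, and the linearization there has eigenvalues -ν_f/2 ± (1/2)√(8(k+1)ν_f α + ν_f²). In particular, for every α > 0 the two eigenvalues are real and of opposite sign, so the equilibrium is a saddle. -/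
/-!
On `ν > 0` the first component vanishes exactly when `ν ^ (k + 1) = k β`, which has the single
positive root `ν_f`; the second component then fixes `x`. Since the factor
`2x - α g₀ + β ν^{-k}` vanishes at the equilibrium, the linearization there is
`(h₁, h₂) ↦ (α (k + 1) h₂, 2 ν_f h₁ - ν_f h₂)`, whose characteristic polynomial
`μ² + ν_f μ - 2 (k + 1) ν_f α` has a negative constant term, hence one root of each sign.
-/

lemma hasDerivAt_const_div_pow (c : ℝ) (n : ℕ) {x : ℝ} (hx : x ≠ 0) :
    HasDerivAt (fun t => c / t ^ n) (-(n * c / x ^ (n + 1))) x := by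
  have h := ((hasDerivAt_pow n x).inv (pow_ne_zero n hx)).const_mul c
  refine h.congr_deriv ?_
  cases n with
  | zero => simp
  | succ m =>
    simp only [Nat.add_sub_cancel]
    field_simp
    ring

theorem Module.End.hasEigenvalue_iff_of_apply_eq {K : Type*} [Field K]
    (T : Module.End K (K × K)) {a b c d : K} (hb : b ≠ 0)
    (hT : ∀ v, T v = (a * v.1 + b * v.2, c * v.1 + d * v.2)) (μ : K) :
    T.HasEigenvalue μ ↔ (μ - a) * (μ - d) - b * c = 0 := by
  constructor
  · intro hμ
    obtain ⟨v, hv, hv0⟩ := hμ.exists_hasEigenvector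
    have hTv : T v = μ • v := Module.End.mem_eigenspace_iff.1 hv
    rw [hT] at hTv
    obtain ⟨h1, h2⟩ := Prod.ext_iff.1 hTv
    simp only [Prod.smul_fst, Prod.smul_snd, smul_eq_mul] at h1 h2
    have e1 : ((μ - a) * (μ - d) - b * c) * v.1 = 0 := by
      linear_combination (d - μ) * h1 - b * h2
    have e2 : ((μ - a) * (μ - d) - b * c) * v.2 = 0 := by
      linear_combination -c * h1 + (a - μ) * h2
    by_contra hne
    exact hv0 (Prod.ext ((mul_eq_zero.1 e1).resolve_left hne)
      ((mul_eq_zero.1 e2).resolve_left hne))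
  · intro hμ
    -- `(b, μ - a)` solves the first row, and the second row is then the characteristic equation
    refine Module.End.hasEigenvalue_of_hasEigenvector (x := (b, μ - a))
      ⟨?_, fun h => hb (congrArg Prod.fst h)⟩
    rw [Module.End.mem_eigenspace_iff, hT]
    ext
    · simp only [Prod.smul_fst, smul_eq_mul]; ring
    · simp only [Prod.smul_snd, smul_eq_mul]; linear_combination -hμ

lemma sq_add_mul_sub_eq_zero_iff {p q s μ : ℝ} (hs : s ^ 2 = p ^ 2 + 4 * q) :
    μ ^ 2 + p * μ - q = 0 ↔ μ = -p / 2 + s / 2 ∨ μ = -p / 2 - s / 2 := by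
  rw [← sub_eq_zero (b := -p / 2 + s / 2), ← sub_eq_zero (b := -p / 2 - s / 2), ← mul_eq_zero]
  constructor
  · intro h; linear_combination h - hs / 4
  · intro h; linear_combination h + hs / 4

lemma neg_div_two_sub_neg_and_pos_of_sq_eq {p q s : ℝ} (hp : 0 < p) (hq : 0 < q) (hs0 : 0 ≤ s)
    (hs : s ^ 2 = p ^ 2 + 4 * q) : -p / 2 - s / 2 < 0 ∧ 0 < -p / 2 + s / 2 := by
  have : p < s := by nlinarith
  constructor <;> linarith

noncomputable def foldedSaddleField (k : ℕ) (β α g₀ : ℝ) (z : ℝ × ℝ) : ℝ × ℝ :=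
  (α * (z.2 - k * β / z.2 ^ k), (2 * z.1 - α * g₀ + β / z.2 ^ k) * z.2)

section
variable {k : ℕ} {β α g₀ ν : ℝ}

lemma foldedSaddleField_eq_zero_iff (hα : α ≠ 0) (hν : 0 < ν) (hνk : ν ^ (k + 1) = k * β)
    {z : ℝ × ℝ} (hz : 0 < z.2) :
    foldedSaddleField k β α g₀ z = 0 ↔ z = (α * g₀ / 2 - β / 2 / ν ^ k, ν) := by
  have hzk : z.2 ^ k ≠ 0 := pow_ne_zero k hz.ne'
  have hfirst : z.2 - k * β / z.2 ^ k = 0 ↔ z.2 = ν := by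
    rw [← pow_left_inj₀ hz.le hν.le k.succ_ne_zero, hνk, sub_eq_zero, eq_div_iff hzk, pow_succ']
  have hsecond : 2 * z.1 - α * g₀ + β / z.2 ^ k = 0 ↔ z.1 = α * g₀ / 2 - β / 2 / z.2 ^ k := by
    constructor
    · intro h; linear_combination h / 2
    · intro h; linear_combination 2 * h
  simp only [foldedSaddleField, Prod.ext_iff, Prod.fst_zero, Prod.snd_zero, mul_eq_zero, hα,
    hz.ne', false_or, or_false, hfirst, hsecond]
  rw [and_comm]
  exact and_congr_left fun h2 => by rw [h2]

lemma hasFDerivAt_foldedSaddleField (hν : 0 < ν) (hνk : ν ^ (k + 1) = k * β) :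
    HasFDerivAt (foldedSaddleField k β α g₀)
      (((α * (k + 1)) • ContinuousLinearMap.snd ℝ ℝ ℝ).prod
        ((2 * ν) • ContinuousLinearMap.fst ℝ ℝ ℝ - ν • ContinuousLinearMap.snd ℝ ℝ ℝ))
      (α * g₀ / 2 - β / 2 / ν ^ k, ν) := by
  set zf : ℝ × ℝ := (α * g₀ / 2 - β / 2 / ν ^ k, ν)
  have hone : k * β / ν ^ (k + 1) = 1 := by
    rw [← hνk]; exact div_self (pow_pos hν _).ne'
  have hsnd := hasFDerivAt_snd (𝕜 := ℝ) (E := ℝ) (F := ℝ) (p := zf)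
  have hf := (((hasDerivAt_id ν).sub (hasDerivAt_const_div_pow (k * β) k hν.ne')).const_mul
    α).comp_hasFDerivAt zf hsnd
  have hu := ((hasFDerivAt_fst.const_mul (2 : ℝ)).sub_const (α * g₀)).add
    ((hasDerivAt_const_div_pow β k hν.ne').comp_hasFDerivAt zf hsnd)
  rw [mul_div_assoc, hone] at hf
  rw [hone] at hu
  refine (hf.prodMk (hu.mul hsnd)).congr_fderiv ?_
  ext <;> simp [zf, add_comm] <;> ring
end

/-- Folded saddle: the desingularized reduced system ẋ = α(ν - kβν^{-k}),
ν̇ = (2x - αg₀ + βν^{-k})ν with α > 0 has a unique equilibrium with ν > 0,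
at ν_f = (kβ)^{1/(k+1)}, x_f = αg₀/2 - (β/2)ν_f^{-k}; the eigenvalues of
the linearization there are -ν_f/2 ± (1/2)√(8(k+1)ν_f α + ν_f²), which are
real and of opposite sign, so the equilibrium is a saddle. -/
theorem stmt12 (k : ℕ) (hk : 1 ≤ k) (β α g₀ : ℝ) (hβ : 0 < β) (hα : 0 < α)
    (W : ℝ × ℝ → ℝ × ℝ)
    (hW : ∀ z : ℝ × ℝ,
      W z = (α * (z.2 - (k : ℝ) * β / z.2 ^ k),
             (2 * z.1 - α * g₀ + β / z.2 ^ k) * z.2)) :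
    (∀ z : ℝ × ℝ, 0 < z.2 →
      (W z = 0 ↔
        z = (α * g₀ / 2 - β / 2 / (((k : ℝ) * β) ^ ((1 : ℝ) / ((k : ℝ) + 1))) ^ k,
             ((k : ℝ) * β) ^ ((1 : ℝ) / ((k : ℝ) + 1))))) ∧
    (∀ μ : ℝ,
      Module.End.HasEigenvalue
        ((fderiv ℝ W
          (α * g₀ / 2 - β / 2 / (((k : ℝ) * β) ^ ((1 : ℝ) / ((k : ℝ) + 1))) ^ k,
           ((k : ℝ) * β) ^ ((1 : ℝ) / ((k : ℝ) + 1)))).toLinearMap) μ ↔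
        (μ = -((k : ℝ) * β) ^ ((1 : ℝ) / ((k : ℝ) + 1)) / 2 +
             Real.sqrt (8 * ((k : ℝ) + 1) * ((k : ℝ) * β) ^ ((1 : ℝ) / ((k : ℝ) + 1)) * α +
               (((k : ℝ) * β) ^ ((1 : ℝ) / ((k : ℝ) + 1))) ^ 2) / 2 ∨
         μ = -((k : ℝ) * β) ^ ((1 : ℝ) / ((k : ℝ) + 1)) / 2 -
             Real.sqrt (8 * ((k : ℝ) + 1) * ((k : ℝ) * β) ^ ((1 : ℝ) / ((k : ℝ) + 1)) * α +
               (((k : ℝ) * β) ^ ((1 : ℝ) / ((k : ℝ) + 1))) ^ 2) / 2)) ∧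
    (0 < -((k : ℝ) * β) ^ ((1 : ℝ) / ((k : ℝ) + 1)) / 2 +
        Real.sqrt (8 * ((k : ℝ) + 1) * ((k : ℝ) * β) ^ ((1 : ℝ) / ((k : ℝ) + 1)) * α +
          (((k : ℝ) * β) ^ ((1 : ℝ) / ((k : ℝ) + 1))) ^ 2) / 2) ∧
    (-((k : ℝ) * β) ^ ((1 : ℝ) / ((k : ℝ) + 1)) / 2 -
        Real.sqrt (8 * ((k : ℝ) + 1) * ((k : ℝ) * β) ^ ((1 : ℝ) / ((k : ℝ) + 1)) * α +
          (((k : ℝ) * β) ^ ((1 : ℝ) / ((k : ℝ) + 1))) ^ 2) / 2 < 0) := by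
  have hkβ : 0 < (k : ℝ) * β := mul_pos (by exact_mod_cast hk) hβ
  set ν := ((k : ℝ) * β) ^ ((1 : ℝ) / ((k : ℝ) + 1))
  have hν : 0 < ν := Real.rpow_pos_of_pos hkβ _
  have hνk : ν ^ (k + 1) = k * β := by
    have := Real.rpow_inv_natCast_pow hkβ.le k.succ_ne_zero
    rwa [Nat.cast_succ, ← one_div] at this
  set s := Real.sqrt (8 * ((k : ℝ) + 1) * ν * α + ν ^ 2)
  have hs : s ^ 2 = ν ^ 2 + 4 * (2 * (k + 1) * ν * α) := by
    rw [Real.sq_sqrt (by positivity)]; ring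
  obtain rfl : W = foldedSaddleField k β α g₀ := funext hW
  refine ⟨fun z hz => foldedSaddleField_eq_zero_iff hα.ne' hν hνk hz, fun μ => ?_,
    (neg_div_two_sub_neg_and_pos_of_sq_eq hν (by positivity) (Real.sqrt_nonneg _) hs).symm⟩
  rw [(hasFDerivAt_foldedSaddleField hν hνk).fderiv,
    Module.End.hasEigenvalue_iff_of_apply_eq _ (by positivity : α * (k + 1) ≠ 0)
      (a := 0) (c := 2 * ν) (d := -ν) (fun v => by simp [sub_eq_add_neg]),
    ← sq_add_mul_sub_eq_zero_iff hs]
  congr! 1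
  ring
end
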